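/- Let G=(V,E) be a directed graph and v₀, v_g ∈ V with v₀ ≠ v_g and (v₀,v_g) ∉ E. Then there exists a positional strategy σ_d for the demon in S^tb(G) such that no play of S^tb(G) from ((E,v₀),r) consistent with σ_d contains a state whose runner position is v_g; one such strategy is: at a demon-owned state ((E',v),d), delete the edge (v,v_g) if (v,v_g) ∈ E', and otherwise delete an arbitrary edge of E'. -/
import Mathlib


/-- A sabotage game-state: the set of remaining edges together with the runner's position. -/
abbrev GState (V : Type*) := Finset (V × V) × V

/-- The two agents: runner and demon. -/
inductive Agent : Type
  | r : Agent
  | d : Agent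
deriving DecidableEq

/-- A state of the turn-based sabotage game structure: a game-state plus the agent owning it. -/
abbrev TbState (V : Type*) := GState V × Agent

section Defs

variable {V : Type*} [DecidableEq V]

/-- Runner's available actions in the turn-based structure (`none` is skip). -/
def tbActR (s : TbState V) : Set (Option (V × V)) :=
  match s.2 with
  | Agent.r => {a | ∃ e ∈ s.1.1, e.1 = s.1.2 ∧ a = some e}
  | Agent.d => {none}

/-- Demon's available actions in the turn-based structure (`none` is skip). -/
def tbActD (s : TbState V) : Set (Option (V × V)) :=
  match s.2 with
  | Agent.r => {none}
  | Agent.d => {a | ∃ e ∈ s.1.1, a = some e}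

/-- Transition function of the turn-based sabotage game structure. -/
def tbDelta (s : TbState V) (ar ad : Option (V × V)) : TbState V :=
  match ar, ad with
  | some e, _ => ((s.1.1, e.2), Agent.d)
  | none, some e => ((s.1.1.erase e, s.1.2), Agent.r)
  | none, none => s

/-- `t` arises from `s` in the turn-based structure by the available action pair `(ar, ad)`. -/
def tbStepBy (s : TbState V) (ar ad : Option (V × V)) (t : TbState V) : Prop :=
  ar ∈ tbActR s ∧ ad ∈ tbActD s ∧ t = tbDelta s ar ad

/-- One-step transition relation of the turn-based structure. -/
def tbStep (s t : TbState V) : Prop := ∃ ar ad, tbStepBy s ar ad t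

/-- Runner's available actions in the concurrent structure. -/
def conActR (s : GState V) : Set (V × V) := {e | e ∈ s.1 ∧ e.1 = s.2}

/-- Demon's available actions in the concurrent structure. -/
def conActD (s : GState V) : Set (V × V) := {e | e ∈ s.1}

/-- Transition function of the concurrent sabotage game structure. -/
def conDelta (s : GState V) (er ed : V × V) : GState V :=
  if er = ed then s else (s.1.erase ed, er.2)

/-- `t` arises from `s` in the concurrent structure by the available action pair `(er, ed)`. -/
def conStepBy (s : GState V) (er ed : V × V) (t : GState V) : Prop :=
  er ∈ s.1 ∧ er.1 = s.2 ∧ ed ∈ s.1 ∧ t = conDelta s er ed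

/-- One-step transition relation of the concurrent structure. -/
def conStep (s t : GState V) : Prop := ∃ er ed, conStepBy s er ed t

/-- Runner's available actions in the general structure (`none` is skip, always available). -/
def genActR (s : GState V) : Set (Option (V × V)) :=
  {a | a = none ∨ ∃ e ∈ s.1, e.1 = s.2 ∧ a = some e}

/-- Demon's available actions in the general structure (`none` is skip, always available). -/
def genActD (s : GState V) : Set (Option (V × V)) :=
  {a | a = none ∨ ∃ e ∈ s.1, a = some e}

/-- Transition function of the general sabotage game structure. -/
def genDelta (s : GState V) (ar ad : Option (V × V)) : GState V :=
  match ar, ad with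
  | none, none => s
  | none, some ed => (s.1.erase ed, s.2)
  | some er, none => (s.1, er.2)
  | some er, some ed => if er = ed then s else (s.1.erase ed, er.2)

/-- `t` arises from `s` in the general structure by the available action pair `(ar, ad)`. -/
def genStepBy (s : GState V) (ar ad : Option (V × V)) (t : GState V) : Prop :=
  ar ∈ genActR s ∧ ad ∈ genActD s ∧ t = genDelta s ar ad

/-- One-step transition relation of the general structure. -/
def genStep (s t : GState V) : Prop := ∃ ar ad, genStepBy s ar ad t

/-- A (finite or infinite) play: a maximal sequence of states starting at `s₀`, where each state
arises from its predecessor by the step relation. `p n = none` means the play has already ended. -/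
def IsPlay {S : Type*} (step : S → S → Prop) (s₀ : S) (p : ℕ → Option S) : Prop :=
  p 0 = some s₀ ∧
  (∀ n t, p (n + 1) = some t → ∃ s, p n = some s ∧ step s t) ∧
  (∀ n s, p n = some s → (∃ t, step s t) → (p (n + 1)).isSome)

/-- The structural label of a game-state `(E', v)`: the proposition `p_v` (coded `Sum.inl v`)
together with the propositions `q_e` for `e ∈ E'` (coded `Sum.inr e`). -/
def label (s : GState V) : Set (V ⊕ (V × V)) :=
  {x | x = Sum.inl s.2 ∨ ∃ e ∈ s.1, x = Sum.inr e}

/-- `σ` is a positional runner strategy in the turn-based structure. -/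
def TbStratR (σ : TbState V → Option (V × V)) : Prop :=
  ∀ s, (tbActR s).Nonempty → σ s ∈ tbActR s

/-- `σ` is a positional demon strategy in the turn-based structure. -/
def TbStratD (σ : TbState V → Option (V × V)) : Prop :=
  ∀ s, (tbActD s).Nonempty → σ s ∈ tbActD s

/-- The play `p` is consistent with the runner strategy `σ` in the turn-based structure. -/
def TbConsR (σ : TbState V → Option (V × V)) (p : ℕ → Option (TbState V)) : Prop :=
  ∀ n s t, p n = some s → p (n + 1) = some t → ∃ ad, tbStepBy s (σ s) ad t

/-- The play `p` is consistent with the demon strategy `σ` in the turn-based structure. -/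
def TbConsD (σ : TbState V → Option (V × V)) (p : ℕ → Option (TbState V)) : Prop :=
  ∀ n s t, p n = some s → p (n + 1) = some t → ∃ ar, tbStepBy s ar (σ s) t

/-- The play `p` is consistent with both strategies in the turn-based structure. -/
def TbConsRD (σr σd : TbState V → Option (V × V)) (p : ℕ → Option (TbState V)) : Prop :=
  ∀ n s t, p n = some s → p (n + 1) = some t → tbStepBy s (σr s) (σd s) t

/-- `σ` is a positional runner strategy in the concurrent structure. -/
def ConStratR (σ : GState V → V × V) : Prop :=
  ∀ s, (conActR s).Nonempty → σ s ∈ conActR s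

/-- `σ` is a positional demon strategy in the concurrent structure. -/
def ConStratD (σ : GState V → V × V) : Prop :=
  ∀ s, (conActD s).Nonempty → σ s ∈ conActD s

/-- The play `p` is consistent with both strategies in the concurrent structure. -/
def ConConsRD (σr σd : GState V → V × V) (p : ℕ → Option (GState V)) : Prop :=
  ∀ n s t, p n = some s → p (n + 1) = some t → conStepBy s (σr s) (σd s) t

/-- Runner has a winning strategy in the turn-based reachability sabotage game with goal `vg`,
from the game-state `(E', v)`. -/
def Reach (vg : V) (E' : Finset (V × V)) (v : V) : Prop :=
  v = vg ∨ ∃ e ∈ E', e.1 = v ∧ ∀ f ∈ E', Reach vg (E'.erase f) e.2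
termination_by E'.card
decreasing_by exact Finset.card_erase_lt_of_mem (by assumption)

/-- Runner has a winning strategy in the turn-based liveness sabotage game with liveness
parameter `b ≥ 1`, from the game-state `(E', v)`. -/
def Live : ℕ → Finset (V × V) → V → Prop
  | 0, _, _ => True
  | 1, E', v => ∃ e ∈ E', e.1 = v
  | n + 2, E', v => ∃ e ∈ E', e.1 = v ∧ ∀ f ∈ E', Live (n + 1) (E'.erase f) e.2

end Defs

/-- Formulas of sabotage modal logic over a set `P` of propositions. -/
inductive SML (P : Type*) : Type _
  | top : SML P
  | atom : P → SML P
  | neg : SML P → SML P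
  | and : SML P → SML P → SML P
  | dia : SML P → SML P
  | sab : SML P → SML P

namespace SML
/-- Disjunction. -/
def or {P : Type*} (φ ψ : SML P) : SML P := .neg (.and (.neg φ) (.neg ψ))
/-- Box. -/
def box {P : Type*} (φ : SML P) : SML P := .neg (.dia (.neg φ))
/-- Sabotage box `■`. -/
def sabBox {P : Type*} (φ : SML P) : SML P := .neg (.sab (.neg φ))
end SML

/-- Truth of an SML formula at world `w` of the sabotage model `(W, R, Val)`. -/
def Sat {W P : Type*} [DecidableEq W] (Val : P → Set W) :
    SML P → Finset (W × W) → W → Prop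
  | .top, _, _ => True
  | .atom q, _, w => w ∈ Val q
  | .neg φ, R, w => ¬ Sat Val φ R w
  | .and φ ψ, R, w => Sat Val φ R w ∧ Sat Val ψ R w
  | .dia φ, R, w => ∃ u, (w, u) ∈ R ∧ Sat Val φ R u
  | .sab φ, R, w => ∃ x ∈ R, Sat Val φ (R.erase x) w

/-- The formulas `ρ₀ := g`, `ρ_{n+1} := g ∨ ◇■ρ_n`, over the single proposition `g`. -/
def rho : ℕ → SML Unit
  | 0 => .atom ()
  | n + 1 => SML.or (.atom ()) (.dia (SML.sabBox (rho n)))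

/-- The formulas `γ₁ := ◇⊤`, `γ_{n+1} := ◇■γ_n` (the value at `0` is a dummy). -/
def gamma : ℕ → SML Unit
  | 0 => .top
  | 1 => .dia .top
  | n + 2 => .dia (SML.sabBox (gamma (n + 1)))

/-- If `v₀ ≠ v_g` and `(v₀, v_g) ∉ E`, then there is a positional demon strategy
in `S^tb(G)` — one deleting the edge `(v, v_g)` at any demon-owned state `((E',v),d)` with
`(v, v_g) ∈ E'`, and deleting an arbitrary edge of `E'` otherwise — such that no play from
`((E,v₀),r)` consistent with it contains a state whose runner position is `v_g`. -/
theorem demon_can_enforce_G_not_g {V : Type*} [DecidableEq V] [Fintype V]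
    (E : Finset (V × V)) (hE : E.Nonempty) (v₀ vg : V)
    (hne : v₀ ≠ vg) (hedge : (v₀, vg) ∉ E) :
    ∃ σd : TbState V → Option (V × V), TbStratD σd ∧
      (∀ (E' : Finset (V × V)) (v : V), (v, vg) ∈ E' →
          σd ((E', v), Agent.d) = some (v, vg)) ∧
      ∀ p : ℕ → Option (TbState V), IsPlay tbStep ((E, v₀), Agent.r) p → TbConsD σd p →
        ¬ ∃ n s, p n = some s ∧ s.1.2 = vg := by
  classical
  set σd : TbState V → Option (V × V) := fun s =>
    match s.2 with
    | Agent.r => none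
    | Agent.d =>
      if (s.1.2, vg) ∈ s.1.1 then some (s.1.2, vg)
      else if h : s.1.1.Nonempty then some h.choose else none
    with hσ
  refine ⟨σd, ?_, ?_, ?_⟩
  · intro s hs
    rcases s with ⟨⟨E', v⟩, a⟩
    cases a with
    | r => simp [tbActD, σd]
    | d =>
      simp only [tbActD] at hs ⊢
      obtain ⟨_, e, he, rfl⟩ := hs
      by_cases h1 : (v, vg) ∈ E'
      · exact ⟨(v, vg), h1, by simp [σd, h1]⟩
      · have hne' : E'.Nonempty := ⟨e, he⟩
        exact ⟨hne'.choose, hne'.choose_spec, by simp [σd, h1, hne']⟩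
  · intro E' v hv
    simp [σd, hv]
  · rintro p hplay hcons ⟨n, s, hn, hvg⟩
    -- invariant
    have inv : ∀ m s, p m = some s → s.1.2 ≠ vg ∧ (s.2 = Agent.r → (s.1.2, vg) ∉ s.1.1) := by
      intro m
      induction m with
      | zero =>
        intro s hs
        rw [hplay.1] at hs
        injection hs with hs; subst hs
        exact ⟨hne, fun _ => hedge⟩
      | succ m ih =>
        intro t ht
        obtain ⟨s, hs, _⟩ := hplay.2.1 m t ht
        obtain ⟨hsvg, hsR⟩ := ih s hs
        obtain ⟨ar, har, had, hdelta⟩ := hcons m s t hs ht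
        rcases s with ⟨⟨E', v⟩, a⟩
        cases a with
        | r =>
          simp only [tbActR, Set.mem_setOf_eq] at har
          obtain ⟨e, he, he1, rfl⟩ := har
          subst hdelta
          refine ⟨?_, by simp [tbDelta]⟩
          simp only [tbDelta]
          intro hcontra
          apply hsR rfl
          have : e = (v, vg) := by
            cases e; simp_all
          rwa [this] at he
        | d =>
          simp only [tbActR, Set.mem_singleton_iff] at har
          subst har
          simp only [tbActD, Set.mem_setOf_eq] at had
          obtain ⟨e, he, hede⟩ := had
          rw [hede] at hdelta
          subst hdelta
          simp only [tbDelta]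
          refine ⟨hsvg, fun _ => ?_⟩
          by_cases h1 : (v, vg) ∈ E'
          · have : σd ((E', v), Agent.d) = some (v, vg) := by simp [σd, h1]
            rw [this] at hede
            injection hede with hede
            rw [← hede]
            simp
          · intro hc
            exact h1 (Finset.mem_of_mem_erase hc)
    exact (inv n s hn).1 hvg
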